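/- Let (c_j)_{j≥1} be a sequence of complex numbers and let 0 < r < 1 be such that the series X(z) = Σ_{j=1}^∞ c_j·z^{−j} converges for all |z| > r. Then for every positive integer n, the series Σ_{k=1}^∞ (μ(k)/(k·n))·Σ_{m=1}^{k·n} X(e^{−2πim/(k·n)}) converges and equals c_n. -/

import Mathlib

open Filter ArithmeticFunction Real

/-!
Averaging the Laurent series of `X` over the `q`-th roots of unity kills every coefficient `c j`
with `q ∤ j`, so `q⁻¹ * ∑ m ∈ Icc 1 q, X (exp (-2πim/q)) = ∑ l ≥ 1, c (q * l)`. Since `X` converges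
at some real `ρ < 1`, `c j = O(ρ ^ j)` and the double series `∑ k, ∑ l, μ k * c (n * k * l)` converges
absolutely; grouping its terms by `m = k * l` and using `∑ d ∣ m, μ d = [m = 1]` leaves `c n`.
-/

theorem sum_Icc_pow_eq_zero {R : Type*} [CommRing R] [IsDomain R] {w : R} {q : ℕ}
    (hw : w ^ q = 1) (hw1 : w ≠ 1) : ∑ m ∈ Finset.Icc 1 q, w ^ m = 0 := by
  have hgeom := geom_sum_Ico_mul w (Nat.le_add_left 1 q)
  rw [pow_succ, hw, one_mul, pow_one, sub_self, Finset.Ico_add_one_right_eq_Icc] at hgeom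
  exact (mul_eq_zero.mp hgeom).resolve_right (sub_ne_zero.mpr hw1)

theorem hasSum_comp_mul_iff_indicator {α : Type*} [AddCommMonoid α] [TopologicalSpace α]
    {f : ℕ → α} {q : ℕ} (hq : q ≠ 0) {a : α} :
    HasSum (fun l => f (q * l)) a ↔ HasSum (fun j => if q ∣ j then f j else 0) a := by
  refine Iff.trans ?_ ((mul_right_injective₀ hq).hasSum_iff fun j hj => if_neg ?_)
  · simp [Function.comp_def]
  · rintro ⟨l, rfl⟩
    exact hj ⟨l, rfl⟩

theorem IsPrimitiveRoot.hasSum_comp_mul {K : Type*} [Field K] [TopologicalSpace K]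
    [IsTopologicalRing K] {ζ : K} {q : ℕ} (hζ : IsPrimitiveRoot ζ q) (hq : q ≠ 0)
    {a s : ℕ → K} (hs : ∀ m ∈ Finset.Icc 1 q, HasSum (fun j => a j * ζ ^ (m * j)) (s m)) :
    HasSum (fun l => a (q * l)) ((q : K)⁻¹ * ∑ m ∈ Finset.Icc 1 q, s m) := by
  have : NeZero q := ⟨hq⟩
  have hq' : (q : K) ≠ 0 := hζ.neZero'.out
  have hfilter (j : ℕ) :
      (q : K)⁻¹ * ∑ m ∈ Finset.Icc 1 q, a j * ζ ^ (m * j) = if q ∣ j then a j else 0 := by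
    simp_rw [← Finset.mul_sum, mul_comm _ j, pow_mul]
    split_ifs with hj
    · simp only [(hζ.pow_eq_one_iff_dvd j).mpr hj, one_pow, Finset.sum_const, Nat.card_Icc,
        add_tsub_cancel_right, nsmul_eq_mul, mul_one]
      field_simp
    · have hw : (ζ ^ j) ^ q = 1 := by rw [← pow_mul, mul_comm, pow_mul, hζ.pow_eq_one, one_pow]
      rw [sum_Icc_pow_eq_zero hw ((hζ.pow_eq_one_iff_dvd j).not.mpr hj), mul_zero, mul_zero]
  rw [hasSum_comp_mul_iff_indicator hq]
  simpa only [hfilter] using (hasSum_sum hs).mul_left (q : K)⁻¹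

theorem Complex.exp_neg_two_pi_I_mul_div_zpow_neg (q m j : ℕ) :
    exp (-(2 * π * I * m / q)) ^ (-(j : ℤ)) = exp (2 * π * I / q) ^ (m * j) := by
  rw [← exp_int_mul, ← exp_nat_mul]
  congr 1
  push_cast
  ring

theorem Complex.norm_exp_neg_two_pi_I_mul_div (q m : ℕ) :
    ‖exp (-(2 * π * I * m / q))‖ = 1 := by
  rw [show -(2 * π * I * m / q) = ((-(2 * π * m / q) : ℝ) : ℂ) * I by push_cast; ring,
    norm_exp_ofReal_mul_I]

theorem hasSum_comp_mul_of_hasSum_zpow_neg {a : ℕ → ℂ} {X : ℂ → ℂ}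
    (hX : ∀ z : ℂ, ‖z‖ = 1 → HasSum (fun j => a j * z ^ (-(j : ℤ))) (X z))
    {q : ℕ} (hq : q ≠ 0) :
    HasSum (fun l => a (q * l))
      ((q : ℂ)⁻¹ * ∑ m ∈ Finset.Icc 1 q, X (Complex.exp (-(2 * π * Complex.I * m / q)))) :=
  (Complex.isPrimitiveRoot_exp q hq).hasSum_comp_mul hq fun m _ => by
    simpa only [Complex.exp_neg_two_pi_I_mul_div_zpow_neg] using
      hX _ (Complex.norm_exp_neg_two_pi_I_mul_div q m)

theorem Summable.exists_norm_le_mul_pow {K : Type*} [NormedField K] {a : ℕ → K} {z : K}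
    (hz : z ≠ 0) (h : Summable fun j => a j * z ^ (-(j : ℤ))) :
    ∃ M, ∀ j, ‖a j‖ ≤ M * ‖z‖ ^ j := by
  obtain ⟨M, hM⟩ := h.tendsto_atTop_zero.norm.isBoundedUnder_le.bddAbove_range
  refine ⟨M, fun j => ?_⟩
  have hj : ‖a j * z ^ (-(j : ℤ))‖ ≤ M := hM ⟨j, rfl⟩
  rwa [norm_mul, zpow_neg, zpow_natCast, norm_inv, norm_pow, ← div_eq_mul_inv,
    div_le_iff₀ (by positivity)] at hj

theorem summable_norm_comp_mul_of_norm_le_mul_pow {E : Type*} [SeminormedAddCommGroup E]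
    {b : ℕ → E} {M ρ : ℝ} (hρ0 : 0 < ρ) (hρ1 : ρ < 1) (hb0 : b 0 = 0)
    (hb : ∀ m, ‖b m‖ ≤ M * ρ ^ m) : Summable fun p : ℕ × ℕ => ‖b (p.1 * p.2)‖ := by
  have hM : 0 ≤ M := by simpa [hb0] using hb 0
  have hgeom := summable_geometric_of_lt_one hρ0.le hρ1
  refine .of_nonneg_of_le (fun _ => norm_nonneg _) (fun ⟨k, l⟩ => ?_)
    ((hgeom.mul_of_nonneg hgeom (fun _ => by positivity) fun _ => by positivity).mul_left (M / ρ))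
  rcases Nat.eq_zero_or_pos k with rfl | hk
  · simp only [zero_mul, hb0, norm_zero]; positivity
  rcases Nat.eq_zero_or_pos l with rfl | hl
  · simp only [mul_zero, hb0, norm_zero]; positivity
  have hexp : k + l ≤ k * l + 1 := by nlinarith
  calc ‖b (k * l)‖ ≤ M * ρ ^ (k * l) := hb _
    _ = M / ρ * ρ ^ (k * l + 1) := by field_simp; ring
    _ ≤ M / ρ * (ρ ^ k * ρ ^ l) := by
      rw [← pow_add]
      exact mul_le_mul_of_nonneg_left (pow_le_pow_of_le_one hρ0.le hρ1.le hexp) (by positivity)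

theorem sum_divisorsAntidiagonal_moebius (m : ℕ) :
    ∑ p ∈ m.divisorsAntidiagonal, moebius p.1 = if m = 1 then 1 else 0 := by
  rw [Nat.sum_divisorsAntidiagonal fun d _ => moebius d, ← coe_mul_zeta_apply,
    moebius_mul_coe_zeta, one_apply]

theorem norm_moebius_smul_le {E : Type*} [SeminormedAddCommGroup E] (k : ℕ) (x : E) :
    ‖moebius k • x‖ ≤ ‖x‖ :=
  (norm_zsmul_le _ x).trans <| mul_le_of_le_one_left (norm_nonneg x) <| by
    rw [Int.norm_eq_abs]
    exact_mod_cast abs_moebius_le_one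

theorem hasSum_moebius_smul_tsum_comp_mul {E : Type*} [NormedAddCommGroup E] [CompleteSpace E]
    {b : ℕ → E} (hb0 : b 0 = 0) (hb : Summable fun p : ℕ × ℕ => ‖b (p.1 * p.2)‖) :
    HasSum (fun k => moebius k • ∑' l, b (k * l)) (b 1) := by
  set G : ℕ × ℕ → E := fun p => moebius p.1 • b (p.1 * p.2)
  have hG : Summable G := .of_norm_bounded hb fun p => norm_moebius_smul_le p.1 _
  have hfiber (m : ℕ) :
      ∑' p : (fun p : ℕ × ℕ => p.1 * p.2) ⁻¹' {m}, G p = if m = 1 then b 1 else 0 := by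
    rcases eq_or_ne m 0 with rfl | hm
    · refine (tsum_congr fun p => ?_).trans tsum_zero
      simp [G, show p.1.1 * p.1.2 = 0 from p.2, hb0]
    have hset : (fun p : ℕ × ℕ => p.1 * p.2) ⁻¹' {m} = m.divisorsAntidiagonal := by
      ext p
      simp [hm]
    rw [hset, Finset.tsum_subtype' m.divisorsAntidiagonal G]
    calc ∑ p ∈ m.divisorsAntidiagonal, G p
        = ∑ p ∈ m.divisorsAntidiagonal, moebius p.1 • b m :=
          Finset.sum_congr rfl fun p hp => by rw [← (Nat.mem_divisorsAntidiagonal.mp hp).1]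
      _ = if m = 1 then b 1 else 0 := by
          rw [← Finset.sum_smul, sum_divisorsAntidiagonal_moebius]
          split_ifs with h <;> simp [h]
  have htotal : ∑' p, G p = b 1 := by
    have h := hG.hasSum.tsum_fiberwise fun p : ℕ × ℕ => p.1 * p.2
    simp only [hfiber] at h
    exact h.unique (hasSum_ite_eq 1 (b 1))
  have hrow (k : ℕ) : HasSum (fun l => G (k, l)) (moebius k • ∑' l, b (k * l)) :=
    (hb.prod_factor k).of_norm.hasSum.const_smul _
  exact htotal ▸ hG.hasSum.prod_fiberwise hrow

theorem HasSum.tendsto_sum_Icc_one {α : Type*} [AddCommMonoid α] [TopologicalSpace α]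
    {f : ℕ → α} {a : α} (h : HasSum f a) (h0 : f 0 = 0) :
    Tendsto (fun N => ∑ k ∈ Finset.Icc 1 N, f k) atTop (nhds a) := by
  have hsum (N : ℕ) : ∑ k ∈ Finset.Icc 1 N, f k = ∑ k ∈ Finset.range (N + 1), f k := by
    refine Finset.sum_subset (fun k hk => ?_) fun k hk hk' => ?_
    · simp only [Finset.mem_Icc, Finset.mem_range] at hk ⊢
      omega
    · obtain rfl : k = 0 := by
        simp only [Finset.mem_Icc, Finset.mem_range] at hk hk'
        omega
      exact h0
  simp only [hsum]
  exact h.tendsto_sum_nat.comp (tendsto_add_atTop_nat 1)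

/-- **AFT for the inverse Z-transform (Corollary 2).**
If `X(z) = ∑_{j=1}^∞ c_j·z^{−j}` converges for all `|z| > r` with `r < 1`, then for every
`n ≥ 1` the series `∑_{k=1}^∞ (μ(k)/(kn))·∑_{m=1}^{kn} X(e^{−2πim/(kn)})` converges
to `c_n`. -/
theorem AFT_inverse_Z_transform
    (c : ℕ → ℂ) (X : ℂ → ℂ) (r : ℝ)
    (hr0 : 0 < r) (hr1 : r < 1)
    (hX : ∀ z : ℂ, r < ‖z‖ →
      HasSum (fun j : ℕ => c (j + 1) * z ^ (-((j : ℤ) + 1))) (X z)) :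
    ∀ n : ℕ, 1 ≤ n →
      Tendsto
        (fun N : ℕ => ∑ k ∈ Finset.Icc 1 N,
          ((moebius k : ℂ) / (k * n)) *
            ∑ m ∈ Finset.Icc 1 (k * n),
              X (Complex.exp (-(2 * π * Complex.I * m / (k * n)))))
        atTop (nhds (c n)) := by
  intro n hn
  have hn0 : n ≠ 0 := Nat.one_le_iff_ne_zero.mp hn
  set a : ℕ → ℂ := fun j => if j = 0 then 0 else c j
  have ha (z : ℂ) (hz : r < ‖z‖) : HasSum (fun j => a j * z ^ (-(j : ℤ))) (X z) :=
    (hasSum_nat_add_iff' 1).mp (by simpa [a] using hX z hz)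
  obtain ⟨ρ, hrρ, hρ1⟩ := exists_between hr1
  have hρ0 : 0 < ρ := hr0.trans hrρ
  obtain ⟨M, hM⟩ := (ha ρ (by rwa [Complex.norm_real, norm_of_nonneg hρ0.le])).summable
    |>.exists_norm_le_mul_pow (Complex.ofReal_ne_zero.mpr hρ0.ne')
  have hb : Summable fun p : ℕ × ℕ => ‖a (n * (p.1 * p.2))‖ :=
    summable_norm_comp_mul_of_norm_le_mul_pow (b := fun l => a (n * l)) (pow_pos hρ0 n)
      (pow_lt_one₀ hρ0.le hρ1 hn0) (by simp [a]) fun m => by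
        simpa only [Complex.norm_real, norm_of_nonneg hρ0.le, pow_mul] using hM (n * m)
  have hterm (k : ℕ) : moebius k • ∑' l, a (n * (k * l)) = (moebius k : ℂ) / (k * n) *
      ∑ m ∈ Finset.Icc 1 (k * n), X (Complex.exp (-(2 * π * Complex.I * m / (k * n)))) := by
    rcases eq_or_ne k 0 with rfl | hk
    · simp
    have hrow := hasSum_comp_mul_of_hasSum_zpow_neg (fun z hz => ha z (hz ▸ hr1))
      (mul_ne_zero hk hn0)
    rw [Nat.cast_mul] at hrow
    rw [zsmul_eq_mul, div_eq_mul_inv, mul_assoc, ← hrow.tsum_eq]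
    simp only [mul_left_comm n, mul_assoc]
  have hcn : a (n * 1) = c n := by simp [a, hn0]
  refine HasSum.tendsto_sum_Icc_one ?_ (by simp)
  simpa only [hterm, hcn] using
    hasSum_moebius_smul_tsum_comp_mul (b := fun l => a (n * l)) (by simp [a]) hb
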